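/- Let H be a 2N×2N real symmetric invertible matrix. Let Σ_pp, Σ_qq be N×N diagonal matrices with strictly positive diagonal entries and Σ_p := [[Σ_pp, 0],[0, Σ_qq]]; let Σ_nv, Σ_nθ be N×N diagonal matrices with strictly positive diagonal entries and Σ_n := [[Σ_nv, 0],[0, Σ_nθ]]. Let Σ_v := H⁻¹ Σ_p H⁻¹ and Δ := (Σ_v + Σ_n)⁻¹ − Σ_v⁻¹. Then for all indices i, j: |Δ(i,j)| ≤ (λmax(H²))² · (max_i max(Σ_nv(i,i), Σ_nθ(i,i))) / (min_i min(Σ_pp(i,i)², Σ_qq(i,i)²)), where λmax(A) denotes the largest eigenvalue of a real symmetric matrix A. -/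

import Mathlib

open Matrix

/-- The largest eigenvalue of a real symmetric (Hermitian) matrix. -/
noncomputable def maxEig {n : Type*} [Fintype n] [DecidableEq n]
    {A : Matrix n n ℝ} (hA : A.IsHermitian) : ℝ := ⨆ k, hA.eigenvalues k

/-!
Write `P = Σ_v⁻¹ = H Σ_p⁻¹ H` and `Q = (Σ_v + Σ_n)⁻¹`, so that `Δ = Q - P`. The resolvent
identities `P - Q = P Σ_n Q = Q Σ_n P` give `P - Q = Q Σ_n Q + (Σ_n Q)ᵀ P (Σ_n Q)` and
`P Σ_n P - (P - Q) = (Σ_n P)ᵀ Q (Σ_n P)`, so `0 ≤ P - Q ≤ P Σ_n P` in the Loewner order.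
Bounding `Σ_n`, `H²` and `Σ_p⁻²` by multiples of the identity and conjugating gives
`P Σ_n P ≤ λmax(H²)² · max Σ_n / min Σ_p² · 1`, and a matrix `M` with `0 ≤ M ≤ c · 1` has all
entries bounded by `c` in absolute value.
-/

open scoped MatrixOrder ComplexOrder

section SupInf

variable {ι : Type*} [Finite ι]

lemma sum_elim_le_ciSup_max (f g : ι → ℝ) (k : ι ⊕ ι) :
    Sum.elim f g k ≤ ⨆ i, max (f i) (g i) := by
  have hle (i : ι) := le_ciSup (f := fun i => max (f i) (g i)) (Set.finite_range _).bddAbove i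
  rcases k with i | i
  · exact (le_max_left _ _).trans (hle i)
  · exact (le_max_right _ _).trans (hle i)

lemma ciInf_min_le_sum_elim (f g : ι → ℝ) (k : ι ⊕ ι) :
    ⨅ i, min (f i) (g i) ≤ Sum.elim f g k := by
  rcases k with i | i
  · exact (ciInf_le (Set.finite_range _).bddBelow i).trans (min_le_left _ _)
  · exact (ciInf_le (Set.finite_range _).bddBelow i).trans (min_le_right _ _)

lemma ciInf_min_pos [Nonempty ι] {f g : ι → ℝ} (hf : ∀ i, 0 < f i) (hg : ∀ i, 0 < g i) :
    0 < ⨅ i, min (f i) (g i) := by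
  obtain ⟨i, hi⟩ := exists_eq_ciInf_of_finite (f := fun i => min (f i) (g i))
  exact hi ▸ lt_min (hf i) (hg i)

end SupInf

namespace Matrix

section Inverse

variable {n 𝕜 : Type*} [Fintype n] [DecidableEq n] [RCLike 𝕜] {A B : Matrix n n 𝕜}

lemma PosDef.inv_sub_inv_add_eq (hA : A.PosDef) (hB : B.PosSemidef) :
    A⁻¹ - (A + B)⁻¹ = A⁻¹ * B * (A + B)⁻¹ ∧ A⁻¹ - (A + B)⁻¹ = (A + B)⁻¹ * B * A⁻¹ := by
  have hunit : IsUnit A ↔ IsUnit (A + B) := iff_of_true hA.isUnit (hA.add_posSemidef hB).isUnit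
  constructor
  · rw [inv_sub_inv hunit, add_sub_cancel_left]
  · rw [← neg_sub, inv_sub_inv hunit.symm, sub_add_cancel_left, Matrix.mul_neg, Matrix.neg_mul,
      neg_neg]

lemma PosDef.inv_add_le_inv (hA : A.PosDef) (hB : B.PosSemidef) : (A + B)⁻¹ ≤ A⁻¹ := by
  obtain ⟨hPBQ, hQBP⟩ := hA.inv_sub_inv_add_eq hB
  set P := A⁻¹
  set Q := (A + B)⁻¹
  have hQ : IsSelfAdjoint Q := (hA.add_posSemidef hB).inv.isHermitian
  have h : P - Q = Q * B * Q + star (B * Q) * P * (B * Q) := by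
    rw [star_mul, hQ.star_eq, hB.isHermitian.star_eq]
    calc P - Q = Q * B * (Q + (P - Q)) := by rw [add_sub_cancel, hQBP]
      _ = Q * B * Q + Q * B * P * (B * Q) := by
        rw [hPBQ, Matrix.mul_add]; simp only [Matrix.mul_assoc]
  rw [← sub_nonneg, h]
  exact add_nonneg (hQ.conjugate_nonneg hB.nonneg)
    (star_left_conjugate_nonneg hA.inv.posSemidef.nonneg _)

lemma PosDef.inv_sub_inv_add_le (hA : A.PosDef) (hB : B.PosSemidef) :
    A⁻¹ - (A + B)⁻¹ ≤ A⁻¹ * B * A⁻¹ := by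
  obtain ⟨hPBQ, hQBP⟩ := hA.inv_sub_inv_add_eq hB
  set P := A⁻¹
  set Q := (A + B)⁻¹
  have h : P * B * P - (P - Q) = star (B * P) * Q * (B * P) := by
    rw [star_mul, hA.inv.isHermitian.star_eq, hB.isHermitian.star_eq]
    calc P * B * P - (P - Q) = P * B * (P - Q) := by rw [Matrix.mul_sub, hPBQ]
      _ = P * B * Q * (B * P) := by rw [hQBP]; simp only [Matrix.mul_assoc]
  rw [← sub_nonneg, h]
  exact star_left_conjugate_nonneg (hA.add_posSemidef hB).inv.posSemidef.nonneg _

end Inverse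

section Real

variable {n : Type*}

section Diagonal

variable [DecidableEq n]

lemma fromBlocks_eq_diagonal_of_isDiag {A D : Matrix n n ℝ} (hA : A.IsDiag) (hD : D.IsDiag) :
    fromBlocks A 0 0 D = diagonal (Sum.elim A.diag D.diag) := by
  conv_lhs => rw [← hA.diagonal_diag, ← hD.diagonal_diag]
  exact fromBlocks_diagonal _ _

lemma diagonal_le_smul_one {d : n → ℝ} {c : ℝ} (h : ∀ k, d k ≤ c) :
    diagonal d ≤ c • (1 : Matrix n n ℝ) := by
  rw [smul_one_eq_diagonal, le_iff, diagonal_sub]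
  exact posSemidef_diagonal_iff.mpr fun k => sub_nonneg.mpr (h k)

end Diagonal

variable [Fintype n]

lemma PosSemidef.abs_apply_le {M : Matrix n n ℝ} (hM : M.PosSemidef) (i j : n) :
    |M i j| ≤ (M i i + M j j) / 2 := by
  classical
  have hq (s : ℝ) : 0 ≤ M i i + s * (M i j + M j i) + s ^ 2 * M j j := by
    have := hM.dotProduct_mulVec_nonneg (Pi.single i 1 + s • Pi.single j 1)
    simp only [star_trivial, mulVec_add, mulVec_single, MulOpposite.op_one, one_smul, mulVec_smul,
      dotProduct_add, add_dotProduct, single_dotProduct, col_apply, one_mul, smul_dotProduct,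
      smul_eq_mul, dotProduct_smul] at this
    linear_combination this
  have hsymm : M j i = M i j := hM.isHermitian.apply i j
  have hplus := hq 1
  have hminus := hq (-1)
  rw [abs_le]
  constructor <;> linarith

variable [DecidableEq n]

lemma abs_apply_le_of_nonneg_of_le_smul_one {M : Matrix n n ℝ} {c : ℝ} (h₀ : 0 ≤ M)
    (hc : M ≤ c • 1) (i j : n) : |M i j| ≤ c := by
  have hdiag (k : n) : M k k ≤ c := by
    simpa using (le_iff.mp hc).diag_nonneg (i := k)
  linarith [h₀.posSemidef.abs_apply_le i j, hdiag i, hdiag j]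

lemma inv_diagonal_mul_self_le {d : n → ℝ} {m : ℝ} (hm : 0 < m) (hd : ∀ k, m ≤ d k ^ 2) :
    (diagonal d)⁻¹ * (diagonal d)⁻¹ ≤ m⁻¹ • (1 : Matrix n n ℝ) := by
  have hd₀ (k : n) : d k ≠ 0 := fun h => by simpa [h] using hm.trans_le (hd k)
  have hinv : (diagonal d)⁻¹ = diagonal d⁻¹ := inv_eq_left_inv <| by
    rw [diagonal_mul_diagonal, ← diagonal_one]
    exact congrArg diagonal (funext fun k => inv_mul_cancel₀ (hd₀ k))
  rw [hinv, diagonal_mul_diagonal]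
  refine diagonal_le_smul_one fun k => ?_
  rw [Pi.inv_apply, ← mul_inv, ← sq]
  exact inv_anti₀ hm (hd k)

lemma IsHermitian.eigenvalues_le_maxEig {A : Matrix n n ℝ} (hA : A.IsHermitian) (k : n) :
    hA.eigenvalues k ≤ maxEig hA :=
  le_ciSup (Set.finite_range _).bddAbove k

lemma PosSemidef.maxEig_nonneg {A : Matrix n n ℝ} (hA : A.PosSemidef) :
    0 ≤ maxEig hA.isHermitian :=
  Real.iSup_nonneg hA.eigenvalues_nonneg

lemma IsHermitian.le_maxEig_smul_one {A : Matrix n n ℝ} (hA : A.IsHermitian) :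
    A ≤ maxEig hA • (1 : Matrix n n ℝ) := by
  rw [← Algebra.algebraMap_eq_smul_one]
  refine le_algebraMap_of_spectrum_le ?_ hA
  rw [hA.spectrum_real_eq_range_eigenvalues]
  rintro _ ⟨k, rfl⟩
  exact hA.eigenvalues_le_maxEig k

lemma IsHermitian.mul_mul_le_smul_one {P S : Matrix n n ℝ} {c κ : ℝ} (hP : P.IsHermitian)
    (hPP : P * P ≤ κ • 1) (hS : S ≤ c • 1) (hc : 0 ≤ c) : P * S * P ≤ (c * κ) • 1 :=
  calc P * S * P ≤ P * (c • 1) * P := IsSelfAdjoint.conjugate_le_conjugate hS hP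
    _ = c • (P * P) := by rw [Matrix.mul_smul, Matrix.mul_one, Matrix.smul_mul]
    _ ≤ c • (κ • 1) := smul_le_smul_of_nonneg_left hPP hc
    _ = (c * κ) • 1 := smul_smul c κ 1

lemma IsHermitian.conj_mul_self_le_smul_one {H D : Matrix n n ℝ} {μ : ℝ} (hH : H.IsHermitian)
    (hD : D.IsHermitian) (hDD : D * D ≤ μ • 1) (hμ : 0 ≤ μ) :
    H * D * H * (H * D * H) ≤ (maxEig (hH.pow 2) ^ 2 * μ) • 1 := by
  have hH2 : (H ^ 2).PosSemidef := by
    simpa only [sq, hH.eq] using posSemidef_conjTranspose_mul_self H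
  have hHH : H * H ≤ maxEig (hH.pow 2) • 1 := sq H ▸ (hH.pow 2).le_maxEig_smul_one
  calc H * D * H * (H * D * H) = H * (D * (H * H) * D) * H := by simp only [Matrix.mul_assoc]
    _ ≤ (maxEig (hH.pow 2) * μ * maxEig (hH.pow 2)) • 1 :=
      hH.mul_mul_le_smul_one hHH (hD.mul_mul_le_smul_one hDD hHH hH2.maxEig_nonneg)
        (mul_nonneg hH2.maxEig_nonneg hμ)
    _ = (maxEig (hH.pow 2) ^ 2 * μ) • 1 := by ring_nf

lemma abs_inv_add_sub_inv_apply_le {H Sp Sn : Matrix n n ℝ} {μ c : ℝ} (hH : H.IsHermitian)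
    (hHu : IsUnit H) (hSp : Sp.PosDef) (hSpμ : Sp⁻¹ * Sp⁻¹ ≤ μ • 1) (hμ : 0 ≤ μ)
    (hSn : Sn.PosSemidef) (hSnc : Sn ≤ c • 1) (hc : 0 ≤ c) (i j : n) :
    |((H⁻¹ * Sp * H⁻¹ + Sn)⁻¹ - (H⁻¹ * Sp * H⁻¹)⁻¹) i j| ≤ c * (maxEig (hH.pow 2) ^ 2 * μ) := by
  set Sv := H⁻¹ * Sp * H⁻¹
  have hSv : Sv.PosDef := by
    simpa only [hH.inv.eq] using hSp.conjTranspose_mul_mul_same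
      (mulVec_injective_iff_isUnit.mpr (isUnit_nonsing_inv_iff.mpr hHu))
  have hSvinv : Sv⁻¹ = H * Sp⁻¹ * H := by
    rw [Matrix.mul_inv_rev, Matrix.mul_inv_rev,
      nonsing_inv_nonsing_inv _ ((isUnit_iff_isUnit_det H).mp hHu), Matrix.mul_assoc]
  have hupper : Sv⁻¹ - (Sv + Sn)⁻¹ ≤ (c * (maxEig (hH.pow 2) ^ 2 * μ)) • 1 := by
    refine (hSv.inv_sub_inv_add_le hSn).trans ?_
    rw [hSvinv]
    have hP : (H * Sp⁻¹ * H).IsHermitian := by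
      simpa only [hH.eq] using isHermitian_conjTranspose_mul_mul H hSp.inv.isHermitian
    exact hP.mul_mul_le_smul_one
      (hH.conj_mul_self_le_smul_one hSp.inv.isHermitian hSpμ hμ) hSnc hc
  rw [← abs_neg, ← neg_apply, neg_sub]
  exact abs_apply_le_of_nonneg_of_le_smul_one (sub_nonneg.mpr (hSv.inv_add_le_inv hSn)) hupper i j

end Real

end Matrix

/-- second part of Corollary 1 of the paper: noise bound in the special case
`Σ_pq = 0` and `Σ_{n_v n_θ} = 0`. -/
theorem stmt13 (N : ℕ)
    (H : Matrix (Fin N ⊕ Fin N) (Fin N ⊕ Fin N) ℝ)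
    (hH : H.IsHermitian) (hHu : IsUnit H)
    (Spp Sqq Snv Snθ : Matrix (Fin N) (Fin N) ℝ)
    (hSpp : Spp.IsDiag) (hSqq : Sqq.IsDiag) (hSnv : Snv.IsDiag) (hSnθ : Snθ.IsDiag)
    (hSpppos : ∀ i, 0 < Spp i i) (hSqqpos : ∀ i, 0 < Sqq i i)
    (hSnvpos : ∀ i, 0 < Snv i i) (hSnθpos : ∀ i, 0 < Snθ i i)
    (Sp Sn : Matrix (Fin N ⊕ Fin N) (Fin N ⊕ Fin N) ℝ)
    (hSp : Sp = Matrix.fromBlocks Spp 0 0 Sqq)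
    (hSn : Sn = Matrix.fromBlocks Snv 0 0 Snθ)
    (Sv : Matrix (Fin N ⊕ Fin N) (Fin N ⊕ Fin N) ℝ) (hSv : Sv = H⁻¹ * Sp * H⁻¹)
    (Δ : Matrix (Fin N ⊕ Fin N) (Fin N ⊕ Fin N) ℝ) (hΔ : Δ = (Sv + Sn)⁻¹ - Sv⁻¹) :
    ∀ i j, |Δ i j| ≤
      (maxEig (hH.pow 2)) ^ 2 * (⨆ i, max (Snv i i) (Snθ i i)) /
        (⨅ i, min ((Spp i i) ^ 2) ((Sqq i i) ^ 2)) := by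
  cases isEmpty_or_nonempty (Fin N)
  · exact isEmptyElim
  set noise := ⨆ i, max (Snv i i) (Snθ i i)
  set power := ⨅ i, min ((Spp i i) ^ 2) ((Sqq i i) ^ 2)
  rw [fromBlocks_eq_diagonal_of_isDiag hSpp hSqq] at hSp
  rw [fromBlocks_eq_diagonal_of_isDiag hSnv hSnθ] at hSn
  have hpower₀ : 0 < power :=
    ciInf_min_pos (fun i => pow_pos (hSpppos i) 2) fun i => pow_pos (hSqqpos i) 2
  have hpower (k : Fin N ⊕ Fin N) : power ≤ Sum.elim Spp.diag Sqq.diag k ^ 2 := by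
    have := ciInf_min_le_sum_elim (fun i => Spp i i ^ 2) (fun i => Sqq i i ^ 2) k
    rcases k with i | i <;> exact this
  have hSpPD : Sp.PosDef := by
    rw [hSp, posDef_diagonal_iff]
    rintro (i | i); exacts [hSpppos i, hSqqpos i]
  have hSnPSD : Sn.PosSemidef := by
    rw [hSn, posSemidef_diagonal_iff]
    rintro (i | i); exacts [(hSnvpos i).le, (hSnθpos i).le]
  have hnoise₀ : 0 ≤ noise := Real.iSup_nonneg fun i => (hSnvpos i).le.trans (le_max_left _ _)
  intro i j
  rw [hΔ, hSv]
  refine (abs_inv_add_sub_inv_apply_le hH hHu hSpPD ?_ (inv_nonneg.mpr hpower₀.le) hSnPSD ?_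
    hnoise₀ i j).trans_eq (by ring)
  · rw [hSp]; exact inv_diagonal_mul_self_le hpower₀ hpower
  · rw [hSn]; exact diagonal_le_smul_one (sum_elim_le_ciSup_max _ _)
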